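/- Let c₁ = log(2^{1/2}·3^{1/3}·5^{1/5}·30^{-1/30}) be Chebyshev's constant. For every real number x ≥ 30, the Chebyshev function satisfies ψ(x) > c₁·x − (5/2)·log(x) − 1. -/

import Mathlib

open Real

/-- Chebyshev's constant `c₁ = log(2^{1/2}·3^{1/3}·5^{1/5}·30^{-1/30})`. -/
noncomputable def chebyshevC₁ : ℝ :=
  Real.log ((2 : ℝ) ^ ((1 : ℝ)/2) * (3 : ℝ) ^ ((1 : ℝ)/3) *
    (5 : ℝ) ^ ((1 : ℝ)/5) * (30 : ℝ) ^ (-(1 : ℝ)/30))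

/-- Chebyshev's constant `c₂ = (6/5)·c₁`. -/
noncomputable def chebyshevC₂ : ℝ := (6/5) * chebyshevC₁

/-- The second Chebyshev function `ψ(x) = ∑_{n ≤ x} Λ(n)`,
where `Λ` is the von Mangoldt function. -/
noncomputable def chebyshevPsi (x : ℝ) : ℝ :=
  ∑ n ∈ Finset.Iic ⌊x⌋₊, ArithmeticFunction.vonMangoldt n

/-!
Chebyshev's argument. Put `T(y) = log ⌊y⌋!`. Since `log ⌊y⌋! = ∑_{n ≤ y} Λ(n) ⌊y/n⌋`,
the combination `T(x) - T(x/2) - T(x/3) - T(x/5) + T(x/30)` equals `∑_{n ≤ x} Λ(n) ν(⌊x/n⌋)`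
with `ν(m) = m - ⌊m/2⌋ - ⌊m/3⌋ - ⌊m/5⌋ + ⌊m/30⌋ ≤ 1`, so it is at most `ψ(x)`.
Stirling's bounds `y log y - y - ½ log y ≤ T(y) ≤ y log y - y + ½ log y + 1` for `y ≥ 1`
bound it from below; as `1 - 1/2 - 1/3 - 1/5 + 1/30 = 0`, the `x log x` and `x` terms cancel,
leaving `c₁ x - (5/2) log x + log 30 - 3`, and `log 30 > 2`.
-/

open Nat hiding log
open Finset ArithmeticFunction.vonMangoldt
open scoped Chebyshev

theorem chebyshevPsi_eq_psi (x : ℝ) : chebyshevPsi x = ψ x := by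
  rw [chebyshevPsi, Chebyshev.psi_eq_sum_Icc]
  rfl

theorem log_factorial_eq_sum_vonMangoldt_mul_div (N : ℕ) :
    log (N ! : ℝ) = ∑ n ∈ Ioc 0 N, Λ n * (N / n : ℕ) := by
  rw [← ArithmeticFunction.sum_Ioc_mul_zeta_eq_sum, ArithmeticFunction.vonMangoldt_mul_zeta,
    ← prod_Ico_id_eq_factorial, cast_prod, log_prod]
  · rfl
  · intro n hn
    have : 0 < n := (mem_Ico.1 hn).1
    positivity

theorem log_factorial_div_eq_sum_vonMangoldt_mul_div (M k : ℕ) :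
    log ((M / k)! : ℝ) = ∑ n ∈ Ioc 0 M, Λ n * (M / n / k : ℕ) := by
  simp only [log_factorial_eq_sum_vonMangoldt_mul_div, Nat.div_right_comm M _ k]
  refine sum_subset (Ioc_subset_Ioc_right (M.div_le_self k)) fun n hn hn' ↦ ?_
  rw [mem_Ioc] at hn hn'
  rw [Nat.div_eq_of_lt (by omega), cast_zero, mul_zero]

theorem chebyshev_weight_le_one (m : ℕ) :
    (m : ℝ) - (m / 2 : ℕ) - (m / 3 : ℕ) - (m / 5 : ℕ) + (m / 30 : ℕ) ≤ 1 := by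
  have h := (Nat.cast_le (α := ℝ)).2 (show m + m / 30 ≤ m / 2 + m / 3 + m / 5 + 1 by omega)
  push_cast at h
  linarith

theorem log_factorial_combination_le_psi (M : ℕ) :
    log (M ! : ℝ) - log ((M / 2)! : ℝ) - log ((M / 3)! : ℝ) - log ((M / 5)! : ℝ)
      + log ((M / 30)! : ℝ) ≤ ψ M := by
  rw [log_factorial_eq_sum_vonMangoldt_mul_div, log_factorial_div_eq_sum_vonMangoldt_mul_div,
    log_factorial_div_eq_sum_vonMangoldt_mul_div, log_factorial_div_eq_sum_vonMangoldt_mul_div,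
    log_factorial_div_eq_sum_vonMangoldt_mul_div, Chebyshev.psi, floor_natCast,
    ← sum_sub_distrib, ← sum_sub_distrib, ← sum_sub_distrib, ← sum_add_distrib]
  refine sum_le_sum fun n _ ↦ ?_
  calc _ = Λ n * ((M / n : ℕ) - (M / n / 2 : ℕ) - (M / n / 3 : ℕ) - (M / n / 5 : ℕ)
        + (M / n / 30 : ℕ) : ℝ) := by ring
    _ ≤ Λ n * 1 :=
      mul_le_mul_of_nonneg_left (chebyshev_weight_le_one _) ArithmeticFunction.vonMangoldt_nonneg
    _ = Λ n := mul_one _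

theorem log_factorial_le_stirling {n : ℕ} (hn : n ≠ 0) :
    log (n ! : ℝ) ≤ n * log n - n + log n / 2 + 1 := by
  obtain ⟨m, rfl⟩ := exists_eq_add_one_of_ne_zero hn
  have h := Stirling.log_stirlingSeq'_antitone (Nat.zero_le m)
  simp only [Function.comp_apply, Stirling.log_stirlingSeq_formula] at h
  rw [log_mul two_ne_zero (by positivity), log_div (by positivity) (exp_ne_zero 1), log_exp] at h
  norm_num at h
  push_cast
  linarith

theorem mul_log_sub_le_mul_log_sub {u v : ℝ} (hu : 0 < u) (hv : 0 < v) :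
    v * log u - u ≤ v * log v - v := by
  have h := log_le_sub_one_of_pos (div_pos hu hv)
  rw [log_div hu.ne' hv.ne'] at h
  have := mul_le_mul_of_nonneg_left h hv.le
  rw [mul_sub, mul_sub, mul_div_cancel₀ u hv.ne'] at this
  linarith

theorem log_factorial_floor_le {y : ℝ} (hy : 1 ≤ y) :
    log (⌊y⌋₊ ! : ℝ) ≤ y * log y - y + log y / 2 + 1 := by
  have hN₀ : ⌊y⌋₊ ≠ 0 := (floor_pos.2 hy).ne'
  have hN : (1 : ℝ) ≤ ⌊y⌋₊ := by exact_mod_cast le_floor (by exact_mod_cast hy)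
  have hNy : (⌊y⌋₊ : ℝ) ≤ y := floor_le (by linarith)
  have hlogN : log ⌊y⌋₊ ≤ log y := log_le_log (by linarith) hNy
  have := mul_log_sub_le_mul_log_sub (by linarith : (0 : ℝ) < ⌊y⌋₊) (by linarith : 0 < y)
  have := mul_le_mul_of_nonneg_right hNy (log_nonneg hN)
  linarith [log_factorial_le_stirling (n := ⌊y⌋₊) hN₀]

theorem le_log_factorial_floor {y : ℝ} (hy : 1 ≤ y) :
    y * log y - y - log y / 2 ≤ log (⌊y⌋₊ ! : ℝ) := by
  have hN₀ : ⌊y⌋₊ ≠ 0 := (floor_pos.2 hy).ne'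
  have hN : (1 : ℝ) ≤ ⌊y⌋₊ := by exact_mod_cast le_floor (by exact_mod_cast hy)
  have hyN : y < ⌊y⌋₊ + 1 := lt_floor_add_one y
  have hlog : log y ≤ log (2 * π) + log ⌊y⌋₊ := by
    rw [← log_mul (by positivity) (by linarith : (0 : ℝ) < ⌊y⌋₊).ne']
    exact log_le_log (by linarith) (by nlinarith [pi_gt_three])
  have := mul_log_sub_le_mul_log_sub (by linarith : 0 < y) (by linarith : (0 : ℝ) < ⌊y⌋₊)
  have := mul_le_mul_of_nonneg_right hyN.le (log_nonneg hy)
  have := Stirling.le_log_factorial_stirling (n := ⌊y⌋₊) hN₀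
  linarith

theorem chebyshevC₁_eq : chebyshevC₁ = log 2 / 2 + log 3 / 3 + log 5 / 5 - log 30 / 30 := by
  simp (disch := positivity) only [chebyshevC₁, log_mul, log_rpow]
  ring

theorem two_lt_log_thirty : 2 < log 30 := by
  rw [lt_log_iff_exp_lt (by norm_num), show (2 : ℝ) = 1 + 1 by norm_num, exp_add]
  nlinarith [exp_one_lt_d9, exp_pos 1]

theorem chebyshevPsi_lower_bound (x : ℝ) (hx : 30 ≤ x) :
    chebyshevPsi x > chebyshevC₁ * x - (5/2) * Real.log x - 1 := by
  have hψ := log_factorial_combination_le_psi ⌊x⌋₊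
  simp only [← floor_div_ofNat, ← Chebyshev.psi_eq_psi_coe_floor] at hψ
  have h1 := le_log_factorial_floor (y := x) (by linarith)
  have h2 := log_factorial_floor_le (y := x / 2) (by linarith)
  have h3 := log_factorial_floor_le (y := x / 3) (by linarith)
  have h5 := log_factorial_floor_le (y := x / 5) (by linarith)
  have h30 := le_log_factorial_floor (y := x / 30) (by linarith)
  have hx0 : x ≠ 0 := by positivity
  simp (disch := norm_num) only [log_div hx0] at h2 h3 h5 h30
  have hlog30 : log 30 = log 2 + log 3 + log 5 := by
    rw [show (30 : ℝ) = 2 * 3 * 5 by norm_num, log_mul (by norm_num) (by norm_num),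
      log_mul (by norm_num) (by norm_num)]
  rw [chebyshevPsi_eq_psi, chebyshevC₁_eq]
  linarith [two_lt_log_thirty]
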